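/- arXiv:2403.14150 — 10 statements merged into one kernel-verified Lean document; each statement's English description precedes it below -/
import Mathlib

section
/- Let a,b,c,d,e,f be complex numbers satisfying ac + bd = -1, ae + bf = -1, and ce + df = -1. Define x = -bdf, y = -ace, s = ace + a + c + e, t = bdf + b + d + f. Then sy + xt + 1 = x^2 + y^2. -/
/-!
Put `p = ac`, `q = ae`, `r = ce`; the hypotheses say `bd = -1 - p`, `bf = -1 - q`, `df = -1 - r`.
Since `(ace)² = pqr` and `ace(a + c + e) = pq + pr + qr` (and likewise for `bdf`), the claim becomes
an identity between elementary symmetric functions of `p, q, r` and of `-1 - p, -1 - q, -1 - r`.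
-/

section

variable {R : Type*} [CommRing R]

theorem two_mul_prod_add_pairwise_of_add_eq_neg_one {p q r p' q' r' : R}
    (hp : p + p' = -1) (hq : q + q' = -1) (hr : r + r' = -1) :
    2 * (p * q * r + p' * q' * r') + (p * q + p * r + q * r) + (p' * q' + p' * r' + q' * r') = 1 := by
  obtain rfl : p' = -1 - p := by linear_combination hp
  obtain rfl : q' = -1 - q := by linear_combination hq
  obtain rfl : r' = -1 - r := by linear_combination hr
  ring

theorem two_mul_sq_add_of_pairwise_dot_eq_neg_one {a b c d e f : R}
    (h1 : a * c + b * d = -1) (h2 : a * e + b * f = -1) (h3 : c * e + d * f = -1) :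
    2 * ((a * c * e) ^ 2 + (b * d * f) ^ 2) + a * c * e * (a + c + e) + b * d * f * (b + d + f)
      = 1 := by
  linear_combination
    two_mul_prod_add_pairwise_of_add_eq_neg_one (p := a * c) (q := a * e) (r := c * e) h1 h2 h3

end

theorem stmt_0 (a b c d e f : ℂ)
    (h1 : a*c + b*d = -1) (h2 : a*e + b*f = -1) (h3 : c*e + d*f = -1)
    (x y s t : ℂ)
    (hx : x = -(b*d*f)) (hy : y = -(a*c*e))
    (hs : s = a*c*e + a + c + e) (ht : t = b*d*f + b + d + f) :
    s*y + x*t + 1 = x^2 + y^2 := by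
  subst hx hy hs ht
  linear_combination -two_mul_sq_add_of_pairwise_dot_eq_neg_one h1 h2 h3
end

section
/- Let a,b,c,d,e,f,p,q,r be complex numbers with ac+bd = -1, ae+bf = -1, ce+df = -1. Define g_{i,j,k} = p a^j b^k + q c^j d^k + r e^j f^k for nonnegative integers i,j,k (so g depends only on j,k here), and define x = -bdf, y = -ace, s = ace+a+c+e, t = bdf+b+d+f. Then for all nonnegative integers j,k: (1) p a^{j+2} b^k + q c^{j+2} d^k + r e^{j+2} f^k = (p a^j b^k + q c^j d^k + r e^j f^k) + s(p a^{j+1} b^k + q c^{j+1} d^k + r e^{j+1} f^k) + x(p a^j b^{k+1} + q c^j d^{k+1} + r e^j f^{k+1}); (2) p a^{j+1} b^{k+1} + q c^{j+1} d^{k+1} + r e^{j+1} f^{k+1} = x(p a^{j+1} b^k + q c^{j+1} d^k + r e^{j+1} f^k) + y(p a^j b^{k+1} + q c^j d^{k+1} + r e^j f^{k+1}); (3) p a^j b^{k+2} + q c^j d^{k+2} + r e^j f^{k+2} = (p a^j b^k + q c^j d^k + r e^j f^k) + y(p a^{j+1} b^k + q c^{j+1} d^k + r e^{j+1} f^k)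 + t(p a^j b^{k+1} + q c^j d^{k+1} + r e^j f^{k+1}). -/
/-!
Each of the points `(a, b)`, `(c, d)`, `(e, f)`, call it `(u, v)`, satisfies the three quadratic
relations `u² = 1 + s u + x v`, `u v = x u + y v`, `v² = 1 + y u + t v`, which follow from its
pairings with the other two points. Multiplying them by `u^j v^k` shows that every term
`p u^j v^k` of the signature obeys the three recurrences, and these are linear, so the sum does too.
-/

section

variable {R : Type*} [CommRing R]

def IsFibRoot (s x y t u v : R) : Prop :=
  u ^ 2 = 1 + s * u + x * v ∧ u * v = x * u + y * v ∧ v ^ 2 = 1 + y * u + t * v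

theorem isFibRoot_of_pairings {a b c d e f s x y t : R}
    (hx : x = -(b * d * f)) (hy : y = -(a * c * e))
    (hs : s = a * c * e + a + c + e) (ht : t = b * d * f + b + d + f)
    (hac : a * c + b * d = -1) (hae : a * e + b * f = -1) (hce : c * e + d * f = -1) :
    IsFibRoot s x y t a b := by
  subst hx hy hs ht
  refine ⟨?_, ?_, ?_⟩
  · linear_combination -(a * e + 1) * hac + (b * d) * hae
  · linear_combination (a * b) * hce
  · linear_combination (a * e) * hac - (b * d + 1) * hae

theorem IsFibRoot.monomial {s x y t u v : R} (h : IsFibRoot s x y t u v) (p : R) (j k : ℕ) :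
    p * u ^ (j + 2) * v ^ k =
        p * u ^ j * v ^ k + s * (p * u ^ (j + 1) * v ^ k) + x * (p * u ^ j * v ^ (k + 1)) ∧
      p * u ^ (j + 1) * v ^ (k + 1) =
        x * (p * u ^ (j + 1) * v ^ k) + y * (p * u ^ j * v ^ (k + 1)) ∧
      p * u ^ j * v ^ (k + 2) =
        p * u ^ j * v ^ k + y * (p * u ^ (j + 1) * v ^ k) + t * (p * u ^ j * v ^ (k + 1)) := by
  obtain ⟨huu, huv, hvv⟩ := h
  exact ⟨by linear_combination (p * u ^ j * v ^ k) * huu,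
    by linear_combination (p * u ^ j * v ^ k) * huv,
    by linear_combination (p * u ^ j * v ^ k) * hvv⟩

end

theorem stmt_1 (a b c d e f p q r : ℂ)
    (h1 : a*c + b*d = -1) (h2 : a*e + b*f = -1) (h3 : c*e + d*f = -1)
    (x y s t : ℂ)
    (hx : x = -(b*d*f)) (hy : y = -(a*c*e))
    (hs : s = a*c*e + a + c + e) (ht : t = b*d*f + b + d + f) :
    ∀ j k : ℕ,
      (p * a^(j+2) * b^k + q * c^(j+2) * d^k + r * e^(j+2) * f^k =
        (p * a^j * b^k + q * c^j * d^k + r * e^j * f^k)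
        + s * (p * a^(j+1) * b^k + q * c^(j+1) * d^k + r * e^(j+1) * f^k)
        + x * (p * a^j * b^(k+1) + q * c^j * d^(k+1) + r * e^j * f^(k+1))) ∧
      (p * a^(j+1) * b^(k+1) + q * c^(j+1) * d^(k+1) + r * e^(j+1) * f^(k+1) =
        x * (p * a^(j+1) * b^k + q * c^(j+1) * d^k + r * e^(j+1) * f^k)
        + y * (p * a^j * b^(k+1) + q * c^j * d^(k+1) + r * e^j * f^(k+1))) ∧
      (p * a^j * b^(k+2) + q * c^j * d^(k+2) + r * e^j * f^(k+2) =
        (p * a^j * b^k + q * c^j * d^k + r * e^j * f^k)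
        + y * (p * a^(j+1) * b^k + q * c^(j+1) * d^k + r * e^(j+1) * f^k)
        + t * (p * a^j * b^(k+1) + q * c^j * d^(k+1) + r * e^j * f^(k+1))) := by
  have hab : IsFibRoot s x y t a b := isFibRoot_of_pairings hx hy hs ht h1 h2 h3
  have hcd : IsFibRoot s x y t c d :=
    isFibRoot_of_pairings (a := c) (c := a) (by rw [hx]; ring) (by rw [hy]; ring)
      (by rw [hs]; ring) (by rw [ht]; ring) (by linear_combination h1) h3 h2
  have hef : IsFibRoot s x y t e f :=
    isFibRoot_of_pairings (a := e) (c := a) (e := c) (by rw [hx]; ring) (by rw [hy]; ring)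
      (by rw [hs]; ring) (by rw [ht]; ring) (by linear_combination h2)
      (by linear_combination h3) h1
  intro j k
  obtain ⟨A₁, A₂, A₃⟩ := hab.monomial p j k
  obtain ⟨C₁, C₂, C₃⟩ := hcd.monomial q j k
  obtain ⟨E₁, E₂, E₃⟩ := hef.monomial r j k
  exact ⟨by linear_combination A₁ + C₁ + E₁, by linear_combination A₂ + C₂ + E₂,
    by linear_combination A₃ + C₃ + E₃⟩
end

section
/- Let a,b,c,d,e,f be complex numbers with ac+bd = -1, ae+bf = -1, ce+df = -1, and define x = -bdf, y = -ace, s = ace+a+c+e. Set X = -y, Y = s+y, Z = -x^2 - y^2 + (s+y)y - 1. Then a, c, e are roots of the cubic t^3 - Y t^2 + Z t - X = 0, i.e., this cubic factors as (t-a)(t-c)(t-e). -/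
/-!
With `b*d = -(1 + a*c)`, `b*f = -(1 + a*e)`, `d*f = -(1 + c*e)`, the square `(b*d*f)^2`
equals `(b*d)*(b*f)*(d*f) = -(1 + a*c)*(1 + a*e)*(1 + c*e)`, and expanding the right-hand side
expresses `a*c + a*e + c*e` through `x`, `y` and `s`. Since `X = a*c*e` and `Y = a + c + e`,
the cubic has the elementary symmetric functions of `a, c, e` as coefficients.
-/

section PairwiseProducts

variable {R : Type*} [CommRing R] {a b c d e f : R}

theorem sq_mul_mul_eq_neg_prod_one_add (h1 : a*c + b*d = -1) (h2 : a*e + b*f = -1)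
    (h3 : c*e + d*f = -1) :
    (b*d*f)^2 = -((1 + a*c) * (1 + a*e) * (1 + c*e)) := by
  have hbd : b*d = -(1 + a*c) := by linear_combination h1
  have hbf : b*f = -(1 + a*e) := by linear_combination h2
  have hdf : d*f = -(1 + c*e) := by linear_combination h3
  calc (b*d*f)^2 = (b*d) * (b*f) * (d*f) := by ring
    _ = -((1 + a*c) * (1 + a*e) * (1 + c*e)) := by rw [hbd, hbf, hdf]; ring

theorem mul_add_mul_add_mul_eq_of_pairwise_eq_neg_one (h1 : a*c + b*d = -1)
    (h2 : a*e + b*f = -1) (h3 : c*e + d*f = -1) :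
    a*c + a*e + c*e = -(b*d*f)^2 - (a*c*e)^2 - (a + c + e) * (a*c*e) - 1 := by
  linear_combination sq_mul_mul_eq_neg_prod_one_add h1 h2 h3

end PairwiseProducts

theorem stmt_3 (a b c d e f : ℂ)
    (h1 : a*c + b*d = -1) (h2 : a*e + b*f = -1) (h3 : c*e + d*f = -1)
    (x y s X Y Z : ℂ)
    (hx : x = -(b*d*f)) (hy : y = -(a*c*e)) (hs : s = a*c*e + a + c + e)
    (hX : X = -y) (hY : Y = s + y) (hZ : Z = -x^2 - y^2 + (s + y)*y - 1) :
    ∀ u : ℂ, u^3 - Y*u^2 + Z*u - X = (u - a) * (u - c) * (u - e) := by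
  intro u
  have hY' : Y = a + c + e := by rw [hY, hs, hy]; ring
  have hX' : X = a*c*e := by rw [hX, hy]; ring
  have hZ' : Z = a*c + a*e + c*e := by
    rw [hZ, hx, hy, hs, mul_add_mul_add_mul_eq_of_pairwise_eq_neg_one h1 h2 h3]; ring
  rw [hX', hY', hZ']
  ring
end

section
/- Let s,x,y,t be complex numbers with sy + xt + 1 = x^2 + y^2. Suppose F_1,...,F_6 and G_1,...,G_6 are complex numbers (indexed by unordered pairs from {R,G,B}: 1=RR, 2=RG, 3=RB, 4=GG, 5=GB, 6=BB) satisfying F_4 = F_1 + sF_2 + xF_3, F_5 = xF_2 + yF_3, F_6 = F_1 + yF_2 + tF_3, and the same relations for G. Define H_{uv} = F_{uR}G_{vR} + F_{uG}G_{vG} + F_{uB}G_{vB} for u,v in {R,G,B}. Then H_{RG} = H_{GR} (and symmetrically H_{uv} = H_{vu} for all u,v). -/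
theorem stmt_4 (s x y t : ℂ) (hst : s*y + x*t + 1 = x^2 + y^2)
    (F1 F2 F3 F4 F5 F6 G1 G2 G3 G4 G5 G6 : ℂ)
    (hF4 : F4 = F1 + s*F2 + x*F3) (hF5 : F5 = x*F2 + y*F3) (hF6 : F6 = F1 + y*F2 + t*F3)
    (hG4 : G4 = G1 + s*G2 + x*G3) (hG5 : G5 = x*G2 + y*G3) (hG6 : G6 = G1 + y*G2 + t*G3) :
    -- H_{RG} = H_{GR}
    (F1*G2 + F2*G4 + F3*G5 = F2*G1 + F4*G2 + F5*G3) ∧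
    -- H_{RB} = H_{BR}
    (F1*G3 + F2*G5 + F3*G6 = F3*G1 + F5*G2 + F6*G3) ∧
    -- H_{GB} = H_{BG}
    (F2*G3 + F4*G5 + F5*G6 = F3*G2 + F5*G4 + F6*G5) := by
  subst hF4 hF5 hF6 hG4 hG5 hG6
  exact ⟨by ring, by ring, by linear_combination (F2*G3 - F3*G2) * hst⟩
end

section
/- Let s,x,y,t be complex numbers with sy + xt + 1 = x^2 + y^2. Suppose F_1,...,F_6 and G_1,...,G_6 satisfy F_4 = F_1 + sF_2 + xF_3, F_5 = xF_2 + yF_3, F_6 = F_1 + yF_2 + tF_3 (same for G). Define H_1 = F_1G_1 + F_2G_2 + F_3G_3, H_2 = F_1G_2 + F_2G_4 + F_3G_5, H_3 = F_1G_3 + F_2G_5 + F_3G_6, H_4 = F_2G_2 + F_4G_4 + F_5G_5, H_5 = F_2G_3 + F_4G_5 + F_5G_6, H_6 = F_3G_3 + F_5G_5 + F_6G_6. Then H_4 = H_1 + sH_2 + xH_3, H_5 = xH_2 + yH_3, and H_6 = H_1 + yH_2 + tH_3. -/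
/-!
Arrange a signature `F` as the symmetric matrix `M_F` with rows `(F₁, F₂, F₃)`, `(F₂, F₄, F₅)`,
`(F₃, F₅, F₆)`; the contraction `H` is then the matrix product `M_F M_G`. The generalized Fibonacci
relations say exactly that `M_F = F₁ + F₂ A + F₃ B` for two fixed symmetric matrices `A`, `B`, and
`s y + x t + 1 = x² + y²` is what makes `A² = 1 + s A + x B`, `A B = x A + y B`, `B² = 1 + y A + t B`.
So the span of `1, A, B` is closed under multiplication and `M_F M_G` is again of this form.
-/

variable {R : Type*} [CommRing R]

/-- The matrix `a + b A + c B`, i.e. `M_F` for `(F₁, F₂, F₃) = (a, b, c)`. -/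
def genFibMatrix (s x y t a b c : R) : Matrix (Fin 3) (Fin 3) R :=
  !![a, b, c; b, a + s*b + x*c, x*b + y*c; c, x*b + y*c, a + y*b + t*c]

theorem genFibMatrix_mul_genFibMatrix {s x y t : R} (hst : s*y + x*t + 1 = x^2 + y^2)
    (a b c a' b' c' : R) :
    genFibMatrix s x y t a b c * genFibMatrix s x y t a' b' c' =
      genFibMatrix s x y t (a*a' + b*b' + c*c') (a*b' + b*(a' + s*b' + x*c') + c*(x*b' + y*c'))
        (a*c' + b*(x*b' + y*c') + c*(a' + y*b' + t*c')) := by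
  rw [genFibMatrix, genFibMatrix, genFibMatrix, Matrix.mul_fin_three,
    EmbeddingLike.apply_eq_iff_eq]
  simp only [Matrix.vecCons_inj, and_true, true_and]
  refine ⟨⟨?_, ?_, ?_⟩, ?_, ?_, ?_⟩
  · ring
  · linear_combination (-(c*c')) * hst
  · linear_combination (b*c') * hst
  · ring
  · linear_combination (c*b') * hst
  · linear_combination (-(b*b')) * hst

theorem stmt_5 (s x y t : ℂ) (hst : s*y + x*t + 1 = x^2 + y^2)
    (F1 F2 F3 F4 F5 F6 G1 G2 G3 G4 G5 G6 : ℂ)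
    (hF4 : F4 = F1 + s*F2 + x*F3) (hF5 : F5 = x*F2 + y*F3) (hF6 : F6 = F1 + y*F2 + t*F3)
    (hG4 : G4 = G1 + s*G2 + x*G3) (hG5 : G5 = x*G2 + y*G3) (hG6 : G6 = G1 + y*G2 + t*G3)
    (H1 H2 H3 H4 H5 H6 : ℂ)
    (hH1 : H1 = F1*G1 + F2*G2 + F3*G3)
    (hH2 : H2 = F1*G2 + F2*G4 + F3*G5)
    (hH3 : H3 = F1*G3 + F2*G5 + F3*G6)
    (hH4 : H4 = F2*G2 + F4*G4 + F5*G5)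
    (hH5 : H5 = F2*G3 + F4*G5 + F5*G6)
    (hH6 : H6 = F3*G3 + F5*G5 + F6*G6) :
    H4 = H1 + s*H2 + x*H3 ∧ H5 = x*H2 + y*H3 ∧ H6 = H1 + y*H2 + t*H3 := by
  have hprod := genFibMatrix_mul_genFibMatrix hst F1 F2 F3 G1 G2 G3
  rw [genFibMatrix, genFibMatrix, genFibMatrix, Matrix.mul_fin_three,
    EmbeddingLike.apply_eq_iff_eq] at hprod
  simp only [Matrix.vecCons_inj, and_true, true_and] at hprod
  obtain ⟨⟨_, h22, h23⟩, _, _, h33⟩ := hprod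
  subst hF4 hF5 hF6 hG4 hG5 hG6 hH1 hH2 hH3 hH4 hH5 hH6
  exact ⟨h22, h23, h33⟩
end

section
/- Let a,b,c,d,e,f,h,i,j,p be complex numbers satisfying ad+be+cf+1 = b^2+d^2+p^2, ap+bf+ci = bc+dp+ph, and ha+ib+jc+1 = h^2+c^2+p^2. Let F_0,...,F_9 and G_0,...,G_9 satisfy the domain-4 Fibonacci relations (F_4 = F_0+aF_1+bF_2+cF_3, F_7 = F_0+dF_1+eF_2+fF_3, F_9 = F_0+hF_1+iF_2+jF_3, F_5 = bF_1+dF_2+pF_3, F_6 = cF_1+pF_2+hF_3, F_8 = pF_1+fF_2+iF_3; same for G). Define H_0 = F_0G_0+F_1G_1+F_2G_2+F_3G_3, H_1 = F_0G_1+F_1G_4+F_2G_5+F_3G_6, H_2 = F_0G_2+F_1G_5+F_2G_7+F_3G_8, H_3 = F_0G_3+F_1G_6+F_2G_8+F_3G_9, H_4 = F_1G_1+F_4G_4+F_5G_5+F_6G_6. Then H_4 = H_0 + aH_1 + bH_2 + cH_3. -/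
/-!
Eliminate `F4, F5, F6` and expand `H4 - (H0 + a*H1 + b*H2 + c*H3)` as a linear form in
`F0, …, F3`. The coefficient of `F0` is the relation for `G4`, that of `F1` vanishes identically,
and those of `F2` and `F3` are linear forms in `G0, …, G3` whose coefficients are the three
quadratic constraints.
-/

section

variable {R : Type*} [CommRing R] {a b c d e f h i j p G0 G1 G2 G3 G4 G5 G6 G7 G8 G9 : R}

theorem fib_relation_B
    (e1 : a*d + b*e + c*f + 1 = b^2 + d^2 + p^2)
    (r1 : a*p + b*f + c*i = b*c + d*p + p*h)
    (hG4 : G4 = G0 + a*G1 + b*G2 + c*G3) (hG7 : G7 = G0 + d*G1 + e*G2 + f*G3)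
    (hG5 : G5 = b*G1 + d*G2 + p*G3) (hG6 : G6 = c*G1 + p*G2 + h*G3)
    (hG8 : G8 = p*G1 + f*G2 + i*G3) :
    b*G4 + d*G5 + p*G6 = G2 + a*G5 + b*G7 + c*G8 := by
  subst hG4 hG5 hG6 hG7 hG8
  linear_combination (-G2)*e1 + (-G3)*r1

theorem fib_relation_W
    (r1 : a*p + b*f + c*i = b*c + d*p + p*h)
    (e3 : h*a + i*b + j*c + 1 = h^2 + c^2 + p^2)
    (hG4 : G4 = G0 + a*G1 + b*G2 + c*G3) (hG9 : G9 = G0 + h*G1 + i*G2 + j*G3)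
    (hG5 : G5 = b*G1 + d*G2 + p*G3) (hG6 : G6 = c*G1 + p*G2 + h*G3)
    (hG8 : G8 = p*G1 + f*G2 + i*G3) :
    c*G4 + p*G5 + h*G6 = G3 + a*G6 + b*G8 + c*G9 := by
  subst hG4 hG5 hG6 hG8 hG9
  linear_combination (-G2)*r1 + (-G3)*e3

end

theorem stmt_8_general (a b c d e f h i j p : ℂ)
    (e1 : a*d + b*e + c*f + 1 = b^2 + d^2 + p^2)
    (r1 : a*p + b*f + c*i = b*c + d*p + p*h)
    (e3 : h*a + i*b + j*c + 1 = h^2 + c^2 + p^2)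
    (F0 F1 F2 F3 F4 F5 F6 G0 G1 G2 G3 G4 G5 G6 G7 G8 G9 : ℂ)
    (hF4 : F4 = F0 + a*F1 + b*F2 + c*F3)
    (hF5 : F5 = b*F1 + d*F2 + p*F3)
    (hF6 : F6 = c*F1 + p*F2 + h*F3)
    (hG4 : G4 = G0 + a*G1 + b*G2 + c*G3)
    (hG7 : G7 = G0 + d*G1 + e*G2 + f*G3)
    (hG9 : G9 = G0 + h*G1 + i*G2 + j*G3)
    (hG5 : G5 = b*G1 + d*G2 + p*G3)
    (hG6 : G6 = c*G1 + p*G2 + h*G3)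
    (hG8 : G8 = p*G1 + f*G2 + i*G3)
    (H0 H1 H2 H3 H4 : ℂ)
    (hH0 : H0 = F0*G0 + F1*G1 + F2*G2 + F3*G3)
    (hH1 : H1 = F0*G1 + F1*G4 + F2*G5 + F3*G6)
    (hH2 : H2 = F0*G2 + F1*G5 + F2*G7 + F3*G8)
    (hH3 : H3 = F0*G3 + F1*G6 + F2*G8 + F3*G9)
    (hH4 : H4 = F1*G1 + F4*G4 + F5*G5 + F6*G6) :
    H4 = H0 + a*H1 + b*H2 + c*H3 := by
  have rowB := fib_relation_B e1 r1 hG4 hG7 hG5 hG6 hG8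
  have rowW := fib_relation_W r1 e3 hG4 hG9 hG5 hG6 hG8
  subst hH0 hH1 hH2 hH3 hH4 hF4 hF5 hF6
  linear_combination F0*hG4 + F2*rowB + F3*rowW

theorem stmt_8 (a b c d e f h i j p : ℂ)
    (e1 : a*d + b*e + c*f + 1 = b^2 + d^2 + p^2)
    (r1 : a*p + b*f + c*i = b*c + d*p + p*h)
    (e3 : h*a + i*b + j*c + 1 = h^2 + c^2 + p^2)
    (F0 F1 F2 F3 F4 F5 F6 F7 F8 F9 G0 G1 G2 G3 G4 G5 G6 G7 G8 G9 : ℂ)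
    (hF4 : F4 = F0 + a*F1 + b*F2 + c*F3)
    (hF7 : F7 = F0 + d*F1 + e*F2 + f*F3)
    (hF9 : F9 = F0 + h*F1 + i*F2 + j*F3)
    (hF5 : F5 = b*F1 + d*F2 + p*F3)
    (hF6 : F6 = c*F1 + p*F2 + h*F3)
    (hF8 : F8 = p*F1 + f*F2 + i*F3)
    (hG4 : G4 = G0 + a*G1 + b*G2 + c*G3)
    (hG7 : G7 = G0 + d*G1 + e*G2 + f*G3)
    (hG9 : G9 = G0 + h*G1 + i*G2 + j*G3)
    (hG5 : G5 = b*G1 + d*G2 + p*G3)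
    (hG6 : G6 = c*G1 + p*G2 + h*G3)
    (hG8 : G8 = p*G1 + f*G2 + i*G3)
    (H0 H1 H2 H3 H4 : ℂ)
    (hH0 : H0 = F0*G0 + F1*G1 + F2*G2 + F3*G3)
    (hH1 : H1 = F0*G1 + F1*G4 + F2*G5 + F3*G6)
    (hH2 : H2 = F0*G2 + F1*G5 + F2*G7 + F3*G8)
    (hH3 : H3 = F0*G3 + F1*G6 + F2*G8 + F3*G9)
    (hH4 : H4 = F1*G1 + F4*G4 + F5*G5 + F6*G6) :
    H4 = H0 + a*H1 + b*H2 + c*H3 :=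
  stmt_8_general a b c d e f h i j p e1 r1 e3 F0 F1 F2 F3 F4 F5 F6 G0 G1 G2 G3 G4 G5 G6 G7 G8 G9 hF4
    hF5 hF6 hG4 hG7 hG9 hG5 hG6 hG8 H0 H1 H2 H3 H4 hH0 hH1 hH2 hH3 hH4
end

section
/- Let s,x,y,t be complex numbers with sy+xt+1 = x^2+y^2 and let g be a function from triples (i,j,k) of nonnegative integers with i+j+k = n (n ≥ 4) to ℂ satisfying, for all valid indices: g_{i-2,j+2,k} = g_{i,j,k} + s·g_{i-1,j+1,k} + x·g_{i-1,j,k+1}; g_{i-2,j+1,k+1} = x·g_{i-1,j+1,k} + y·g_{i-1,j,k+1}; g_{i-2,j,k+2} = g_{i,j,k} + y·g_{i-1,j+1,k} + t·g_{i-1,j,k+1}. Define h on triples summing to n-2 by h_{i,j,k} = g_{i+2,j,k} + g_{i,j+2,k} + g_{i,j,k+2} (the color-contraction of g, i.e., merging two dangling edges within the same component). Then h also satisfies the same three linear recurrence relations with the same parameters s,x,y,t. -/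
/-! The three recurrences are linear with constant coefficients, so they commute with the
contraction: each relation for `h` at `(i, j, k)` is the sum of the same relation for `g` at
`(i+2, j, k)`, `(i, j+2, k)` and `(i, j, k+2)`. -/

theorem stmt_10_general (s x y t : ℂ)
    (n : ℕ) (g : ℕ → ℕ → ℕ → ℂ)
    (hg : ∀ i j k : ℕ, i + j + k + 2 = n →
      (g i (j+2) k = g (i+2) j k + s * g (i+1) (j+1) k + x * g (i+1) j (k+1)) ∧
      (g i (j+1) (k+1) = x * g (i+1) (j+1) k + y * g (i+1) j (k+1)) ∧
      (g i j (k+2) = g (i+2) j k + y * g (i+1) (j+1) k + t * g (i+1) j (k+1)))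
    (h : ℕ → ℕ → ℕ → ℂ)
    (hh : ∀ i j k : ℕ, h i j k = g (i+2) j k + g i (j+2) k + g i j (k+2)) :
    ∀ i j k : ℕ, i + j + k + 2 = n - 2 →
      (h i (j+2) k = h (i+2) j k + s * h (i+1) (j+1) k + x * h (i+1) j (k+1)) ∧
      (h i (j+1) (k+1) = x * h (i+1) (j+1) k + y * h (i+1) j (k+1)) ∧
      (h i j (k+2) = h (i+2) j k + y * h (i+1) (j+1) k + t * h (i+1) j (k+1)) := by
  intro i j k hsum
  have hI := hg (i+2) j k (by omega)
  have hJ := hg i (j+2) k (by omega)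
  have hK := hg i j (k+2) (by omega)
  simp only [hh]
  exact ⟨by linear_combination hI.1 + hJ.1 + hK.1,
    by linear_combination hI.2.1 + hJ.2.1 + hK.2.1,
    by linear_combination hI.2.2 + hJ.2.2 + hK.2.2⟩

theorem stmt_10 (s x y t : ℂ) (hst : s*y + x*t + 1 = x^2 + y^2)
    (n : ℕ) (hn : 4 ≤ n) (g : ℕ → ℕ → ℕ → ℂ)
    (hg : ∀ i j k : ℕ, i + j + k + 2 = n →
      (g i (j+2) k = g (i+2) j k + s * g (i+1) (j+1) k + x * g (i+1) j (k+1)) ∧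
      (g i (j+1) (k+1) = x * g (i+1) (j+1) k + y * g (i+1) j (k+1)) ∧
      (g i j (k+2) = g (i+2) j k + y * g (i+1) (j+1) k + t * g (i+1) j (k+1)))
    (h : ℕ → ℕ → ℕ → ℂ)
    (hh : ∀ i j k : ℕ, h i j k = g (i+2) j k + g i (j+2) k + g i j (k+2)) :
    ∀ i j k : ℕ, i + j + k + 2 = n - 2 →
      (h i (j+2) k = h (i+2) j k + s * h (i+1) (j+1) k + x * h (i+1) j (k+1)) ∧
      (h i (j+1) (k+1) = x * h (i+1) (j+1) k + y * h (i+1) j (k+1)) ∧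
      (h i j (k+2) = h (i+2) j k + y * h (i+1) (j+1) k + t * h (i+1) j (k+1)) :=
  stmt_10_general s x y t n g hg h hh
end

section
/- Let a,b,c,d,e,f,h,i,j,p be complex numbers and let g be a function on quadruples (w,x,y,z) of nonnegative integers with w+x+y+z = n (n ≥ 4) satisfying the six domain-4 Fibonacci recurrences: g_{w-2,x+2,y,z} = g_{w,x,y,z} + a g_{w-1,x+1,y,z} + b g_{w-1,x,y+1,z} + c g_{w-1,x,y,z+1}; g_{w-2,x,y+2,z} = g_{w,x,y,z} + d g_{w-1,x+1,y,z} + e g_{w-1,x,y+1,z} + f g_{w-1,x,y,z+1}; g_{w-2,x,y,z+2} = g_{w,x,y,z} + h g_{w-1,x+1,y,z} + i g_{w-1,x,y+1,z} + j g_{w-1,x,y,z+1}; g_{w-2,x+1,y+1,z} = b g_{w-1,x+1,y,z} + d g_{w-1,x,y+1,z} + p g_{w-1,x,y,z+1}; g_{w-2,x+1,y,z+1} = c g_{w-1,x+1,y,z} + p g_{w-1,x,y+1,z} + h g_{w-1,x,y,z+1}; g_{w-2,x,y+1,z+1} = p g_{w-1,x+1,y,z} + f g_{w-1,x,y+1,z}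 + i g_{w-1,x,y,z+1}. Define h' on quadruples summing to n-2 by h'_{w,x,y,z} = g_{w+2,x,y,z} + g_{w,x+2,y,z} + g_{w,x,y+2,z} + g_{w,x,y,z+2}. Then h' satisfies the same six recurrences with the same ten parameters. -/
/-!
The six recurrences are linear in `g` and have constant coefficients, so their solutions are
closed under sums and under translating all four arguments. The self-loop contraction `h'` is the
sum of the four translates of `g` by two steps in a single color, hence again a solution.
-/

section FibonacciRecurrence

variable {R : Type*} [CommRing R] (a b c d e f h i j p : R)

def FibonacciRecurrence (n : ℕ) (g : ℕ → ℕ → ℕ → ℕ → R) : Prop :=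
  ∀ w x y z : ℕ, w + x + y + z + 2 = n →
    (g w (x+2) y z = g (w+2) x y z + a * g (w+1) (x+1) y z + b * g (w+1) x (y+1) z + c * g (w+1) x y (z+1)) ∧
    (g w x (y+2) z = g (w+2) x y z + d * g (w+1) (x+1) y z + e * g (w+1) x (y+1) z + f * g (w+1) x y (z+1)) ∧
    (g w x y (z+2) = g (w+2) x y z + h * g (w+1) (x+1) y z + i * g (w+1) x (y+1) z + j * g (w+1) x y (z+1)) ∧
    (g w (x+1) (y+1) z = b * g (w+1) (x+1) y z + d * g (w+1) x (y+1) z + p * g (w+1) x y (z+1)) ∧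
    (g w (x+1) y (z+1) = c * g (w+1) (x+1) y z + p * g (w+1) x (y+1) z + h * g (w+1) x y (z+1)) ∧
    (g w x (y+1) (z+1) = p * g (w+1) (x+1) y z + f * g (w+1) x (y+1) z + i * g (w+1) x y (z+1))

variable {a b c d e f h i j p}

theorem FibonacciRecurrence.add {n : ℕ} {g₁ g₂ : ℕ → ℕ → ℕ → ℕ → R}
    (h₁ : FibonacciRecurrence a b c d e f h i j p n g₁)
    (h₂ : FibonacciRecurrence a b c d e f h i j p n g₂) :
    FibonacciRecurrence a b c d e f h i j p n (fun w x y z => g₁ w x y z + g₂ w x y z) := by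
  intro w x y z hs
  obtain ⟨r₁, r₂, r₃, r₄, r₅, r₆⟩ := h₁ w x y z hs
  obtain ⟨s₁, s₂, s₃, s₄, s₅, s₆⟩ := h₂ w x y z hs
  exact ⟨by linear_combination r₁ + s₁, by linear_combination r₂ + s₂,
    by linear_combination r₃ + s₃, by linear_combination r₄ + s₄,
    by linear_combination r₅ + s₅, by linear_combination r₆ + s₆⟩

theorem FibonacciRecurrence.translate {n k l m o : ℕ} {g : ℕ → ℕ → ℕ → ℕ → R}
    (hg : FibonacciRecurrence a b c d e f h i j p (n + k + l + m + o) g) :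
    FibonacciRecurrence a b c d e f h i j p n
      (fun w x y z => g (w + k) (x + l) (y + m) (z + o)) := by
  intro w x y z hs
  simpa only [Nat.add_right_comm _ k, Nat.add_right_comm _ l, Nat.add_right_comm _ m,
    Nat.add_right_comm _ o] using hg (w + k) (x + l) (y + m) (z + o) (by omega)

end FibonacciRecurrence

theorem stmt_11_general (a b c d e f h i j p : ℂ)
    (n : ℕ) (g : ℕ → ℕ → ℕ → ℕ → ℂ)
    (hg : ∀ w x y z : ℕ, w + x + y + z + 2 = n →
      (g w (x+2) y z = g (w+2) x y z + a * g (w+1) (x+1) y z + b * g (w+1) x (y+1) z + c * g (w+1) x y (z+1)) ∧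
      (g w x (y+2) z = g (w+2) x y z + d * g (w+1) (x+1) y z + e * g (w+1) x (y+1) z + f * g (w+1) x y (z+1)) ∧
      (g w x y (z+2) = g (w+2) x y z + h * g (w+1) (x+1) y z + i * g (w+1) x (y+1) z + j * g (w+1) x y (z+1)) ∧
      (g w (x+1) (y+1) z = b * g (w+1) (x+1) y z + d * g (w+1) x (y+1) z + p * g (w+1) x y (z+1)) ∧
      (g w (x+1) y (z+1) = c * g (w+1) (x+1) y z + p * g (w+1) x (y+1) z + h * g (w+1) x y (z+1)) ∧
      (g w x (y+1) (z+1) = p * g (w+1) (x+1) y z + f * g (w+1) x (y+1) z + i * g (w+1) x y (z+1)))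
    (h' : ℕ → ℕ → ℕ → ℕ → ℂ)
    (hh : ∀ w x y z : ℕ, h' w x y z = g (w+2) x y z + g w (x+2) y z + g w x (y+2) z + g w x y (z+2)) :
    ∀ w x y z : ℕ, w + x + y + z + 2 = n - 2 →
      (h' w (x+2) y z = h' (w+2) x y z + a * h' (w+1) (x+1) y z + b * h' (w+1) x (y+1) z + c * h' (w+1) x y (z+1)) ∧
      (h' w x (y+2) z = h' (w+2) x y z + d * h' (w+1) (x+1) y z + e * h' (w+1) x (y+1) z + f * h' (w+1) x y (z+1)) ∧
      (h' w x y (z+2) = h' (w+2) x y z + h * h' (w+1) (x+1) y z + i * h' (w+1) x (y+1) z + j * h' (w+1) x y (z+1)) ∧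
      (h' w (x+1) (y+1) z = b * h' (w+1) (x+1) y z + d * h' (w+1) x (y+1) z + p * h' (w+1) x y (z+1)) ∧
      (h' w (x+1) y (z+1) = c * h' (w+1) (x+1) y z + p * h' (w+1) x (y+1) z + h * h' (w+1) x y (z+1)) ∧
      (h' w x (y+1) (z+1) = p * h' (w+1) (x+1) y z + f * h' (w+1) x (y+1) z + i * h' (w+1) x y (z+1)) := by
  intro w x y z hs
  have hg' : FibonacciRecurrence a b c d e f h i j p (n - 2 + 2) g := by
    rwa [Nat.sub_add_cancel (by omega)]
  have hh' : h' = fun w x y z =>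
      g (w+2) x y z + g w (x+2) y z + g w x (y+2) z + g w x y (z+2) := by
    funext w x y z
    exact hh w x y z
  have hrec : FibonacciRecurrence a b c d e f h i j p (n - 2) h' := by
    rw [hh']
    exact ((((hg'.translate (k := 2) (l := 0) (m := 0) (o := 0)).add
      (hg'.translate (k := 0) (l := 2) (m := 0) (o := 0))).add
      (hg'.translate (k := 0) (l := 0) (m := 2) (o := 0))).add
      (hg'.translate (k := 0) (l := 0) (m := 0) (o := 2)))
  exact hrec w x y z hs

theorem stmt_11 (a b c d e f h i j p : ℂ)
    (n : ℕ) (hn : 4 ≤ n) (g : ℕ → ℕ → ℕ → ℕ → ℂ)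
    (hg : ∀ w x y z : ℕ, w + x + y + z + 2 = n →
      (g w (x+2) y z = g (w+2) x y z + a * g (w+1) (x+1) y z + b * g (w+1) x (y+1) z + c * g (w+1) x y (z+1)) ∧
      (g w x (y+2) z = g (w+2) x y z + d * g (w+1) (x+1) y z + e * g (w+1) x (y+1) z + f * g (w+1) x y (z+1)) ∧
      (g w x y (z+2) = g (w+2) x y z + h * g (w+1) (x+1) y z + i * g (w+1) x (y+1) z + j * g (w+1) x y (z+1)) ∧
      (g w (x+1) (y+1) z = b * g (w+1) (x+1) y z + d * g (w+1) x (y+1) z + p * g (w+1) x y (z+1)) ∧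
      (g w (x+1) y (z+1) = c * g (w+1) (x+1) y z + p * g (w+1) x (y+1) z + h * g (w+1) x y (z+1)) ∧
      (g w x (y+1) (z+1) = p * g (w+1) (x+1) y z + f * g (w+1) x (y+1) z + i * g (w+1) x y (z+1)))
    (h' : ℕ → ℕ → ℕ → ℕ → ℂ)
    (hh : ∀ w x y z : ℕ, h' w x y z = g (w+2) x y z + g w (x+2) y z + g w x (y+2) z + g w x y (z+2)) :
    ∀ w x y z : ℕ, w + x + y + z + 2 = n - 2 →
      (h' w (x+2) y z = h' (w+2) x y z + a * h' (w+1) (x+1) y z + b * h' (w+1) x (y+1) z + c * h' (w+1) x y (z+1)) ∧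
      (h' w x (y+2) z = h' (w+2) x y z + d * h' (w+1) (x+1) y z + e * h' (w+1) x (y+1) z + f * h' (w+1) x y (z+1)) ∧
      (h' w x y (z+2) = h' (w+2) x y z + h * h' (w+1) (x+1) y z + i * h' (w+1) x (y+1) z + j * h' (w+1) x y (z+1)) ∧
      (h' w (x+1) (y+1) z = b * h' (w+1) (x+1) y z + d * h' (w+1) x (y+1) z + p * h' (w+1) x y (z+1)) ∧
      (h' w (x+1) y (z+1) = c * h' (w+1) (x+1) y z + p * h' (w+1) x (y+1) z + h * h' (w+1) x y (z+1)) ∧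
      (h' w x (y+1) (z+1) = p * h' (w+1) (x+1) y z + f * h' (w+1) x (y+1) z + i * h' (w+1) x y (z+1)) :=
  stmt_11_general a b c d e f h i j p n g hg h' hh
end

section
/- Let α, β, γ be pairwise orthogonal nonzero vectors in ℂ^3 (orthogonal with respect to the bilinear form ⟨u,v⟩ = u_1v_1+u_2v_2+u_3v_3). Suppose that for every coordinate i ∈ {1,2,3}, at least one of α_i, β_i, γ_i is zero. Then either one of α, β, γ is the zero vector, or there exists a coordinate i and a permutation of {α,β,γ} such that the first vector is a nonzero multiple of the i-th standard basis vector and the other two vectors have zero i-th coordinate. -/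
/-!
A vector with two zero coordinates is a multiple of a basis vector `e k`, and orthogonality to
it forces the `k`-th coordinates of the other two vectors to vanish. Otherwise every vector has
at most one zero coordinate. Then the vectors vanishing at the first and at the second
coordinate are distinct, and their dot product reduces to the product of their third
coordinates, which are both nonzero: they are not orthogonal.
-/

lemma Fin.exists_third (i j : Fin 3) (hij : i ≠ j) :
    ∃ k, k ≠ i ∧ k ≠ j ∧ ∀ l, l = i ∨ l = j ∨ l = k := by
  revert i j
  decide

lemma Pi.eq_single_of_forall_ne {ι R : Type*} [DecidableEq ι] [Zero R] {u : ι → R} {k : ι}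
    (h : ∀ l, l ≠ k → u l = 0) : u = Pi.single k (u k) := by
  funext l
  rcases eq_or_ne l k with rfl | hl
  · simp
  · simp [hl, h l hl]

lemma dotProduct_eq_mul_of_forall_ne {ι R : Type*} [Fintype ι]
    [NonUnitalNonAssocSemiring R] {u v : ι → R} {k : ι} (h : ∀ l, l ≠ k → u l = 0 ∨ v l = 0) :
    u ⬝ᵥ v = u k * v k :=
  Finset.sum_eq_single k (fun l _ hl => by rcases h l hl with h | h <;> simp [h]) (by simp)

section

variable {R : Type*}

lemma eq_zero_or_eq_single_or_zeros_subsingleton [Zero R] (u : Fin 3 → R) :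
    u = 0 ∨ (∃ k, u k ≠ 0 ∧ u = Pi.single k (u k)) ∨ {l | u l = 0}.Subsingleton := by
  by_cases hsub : {l | u l = 0}.Subsingleton
  · exact Or.inr (Or.inr hsub)
  obtain ⟨i, hi, j, hj, hij⟩ := Set.not_subsingleton_iff.mp hsub
  obtain ⟨k, -, -, hcover⟩ := Fin.exists_third i j hij
  have hu : u = Pi.single k (u k) := Pi.eq_single_of_forall_ne fun l hl => by
    rcases hcover l with rfl | rfl | rfl
    exacts [hi, hj, absurd rfl hl]
  by_cases hk : u k = 0
  · exact Or.inl (by rw [hu, hk, Pi.single_zero])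
  · exact Or.inr (Or.inl ⟨k, hk, hu⟩)

lemma exists_eq_smul_single_and_apply_eq_zero [Semiring R] [NoZeroDivisors R] {ι : Type*}
    [Fintype ι] [DecidableEq ι] {u v w : ι → R} {k : ι} (hk : u k ≠ 0)
    (hu : u = Pi.single k (u k)) (huv : u ⬝ᵥ v = 0) (huw : u ⬝ᵥ w = 0) :
    (∃ c : R, c ≠ 0 ∧ u = c • Pi.single k 1) ∧ v k = 0 ∧ w k = 0 := by
  rw [hu, single_dotProduct] at huv huw
  refine ⟨⟨u k, hk, ?_⟩, (mul_eq_zero.mp huv).resolve_left hk,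
    (mul_eq_zero.mp huw).resolve_left hk⟩
  rw [← Pi.single_smul', smul_eq_mul, mul_one]
  exact hu

lemma dotProduct_ne_zero_of_zeros_subsingleton [NonUnitalNonAssocSemiring R] [NoZeroDivisors R]
    {u v : Fin 3 → R} (hu : {l | u l = 0}.Subsingleton) (hv : {l | v l = 0}.Subsingleton)
    {i j : Fin 3} (hij : i ≠ j) (hui : u i = 0) (hvj : v j = 0) : u ⬝ᵥ v ≠ 0 := by
  obtain ⟨k, hki, hkj, hcover⟩ := Fin.exists_third i j hij
  have huk : u k ≠ 0 := fun h => hki (hu h hui)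
  have hvk : v k ≠ 0 := fun h => hkj (hv h hvj)
  rw [dotProduct_eq_mul_of_forall_ne (k := k) fun l hl => ?_]
  · exact mul_ne_zero huk hvk
  · rcases hcover l with rfl | rfl | rfl
    exacts [Or.inl hui, Or.inr hvj, absurd rfl hl]

lemma not_pairwise_orthogonal_of_zeros_subsingleton [CommSemiring R] [NoZeroDivisors R]
    {u v w : Fin 3 → R} (hu : {l | u l = 0}.Subsingleton) (hv : {l | v l = 0}.Subsingleton)
    (hw : {l | w l = 0}.Subsingleton) (h0 : u 0 = 0 ∨ v 0 = 0 ∨ w 0 = 0)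
    (h1 : u 1 = 0 ∨ v 1 = 0 ∨ w 1 = 0) :
    ¬ (u ⬝ᵥ v = 0 ∧ u ⬝ᵥ w = 0 ∧ v ⬝ᵥ w = 0) := by
  rintro ⟨huv, huw, hvw⟩
  have h01 : (0 : Fin 3) ≠ 1 := by decide
  rcases h0 with h0 | h0 | h0 <;> rcases h1 with h1 | h1 | h1
  · exact h01 (hu h0 h1)
  · exact dotProduct_ne_zero_of_zeros_subsingleton hu hv h01 h0 h1 huv
  · exact dotProduct_ne_zero_of_zeros_subsingleton hu hw h01 h0 h1 huw
  · exact dotProduct_ne_zero_of_zeros_subsingleton hv hu h01 h0 h1 (by rwa [dotProduct_comm])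
  · exact h01 (hv h0 h1)
  · exact dotProduct_ne_zero_of_zeros_subsingleton hv hw h01 h0 h1 hvw
  · exact dotProduct_ne_zero_of_zeros_subsingleton hw hu h01 h0 h1 (by rwa [dotProduct_comm])
  · exact dotProduct_ne_zero_of_zeros_subsingleton hw hv h01 h0 h1 (by rwa [dotProduct_comm])
  · exact h01 (hw h0 h1)

end

theorem stmt_12 (α β γ : Fin 3 → ℂ)
    (hαβ : ∑ i, α i * β i = 0) (hαγ : ∑ i, α i * γ i = 0) (hβγ : ∑ i, β i * γ i = 0)
    (hdeg : ∀ i : Fin 3, α i = 0 ∨ β i = 0 ∨ γ i = 0) :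
    (α = 0 ∨ β = 0 ∨ γ = 0) ∨
    (∃ i : Fin 3,
      ((∃ c : ℂ, c ≠ 0 ∧ α = c • (Pi.single i 1 : Fin 3 → ℂ)) ∧ β i = 0 ∧ γ i = 0) ∨
      ((∃ c : ℂ, c ≠ 0 ∧ β = c • (Pi.single i 1 : Fin 3 → ℂ)) ∧ α i = 0 ∧ γ i = 0) ∨
      ((∃ c : ℂ, c ≠ 0 ∧ γ = c • (Pi.single i 1 : Fin 3 → ℂ)) ∧ α i = 0 ∧ β i = 0)) := by
  have hβα : β ⬝ᵥ α = 0 := by rwa [dotProduct_comm]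
  have hγα : γ ⬝ᵥ α = 0 := by rwa [dotProduct_comm]
  have hγβ : γ ⬝ᵥ β = 0 := by rwa [dotProduct_comm]
  rcases eq_zero_or_eq_single_or_zeros_subsingleton α with hα | ⟨k, hk, hα⟩ | hα
  · exact Or.inl (Or.inl hα)
  · exact Or.inr ⟨k, Or.inl (exists_eq_smul_single_and_apply_eq_zero hk hα hαβ hαγ)⟩
  rcases eq_zero_or_eq_single_or_zeros_subsingleton β with hβ | ⟨k, hk, hβ⟩ | hβ
  · exact Or.inl (Or.inr (Or.inl hβ))
  · exact Or.inr ⟨k, Or.inr (Or.inl (exists_eq_smul_single_and_apply_eq_zero hk hβ hβα hβγ))⟩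
  rcases eq_zero_or_eq_single_or_zeros_subsingleton γ with hγ | ⟨k, hk, hγ⟩ | hγ
  · exact Or.inl (Or.inr (Or.inr hγ))
  · exact Or.inr ⟨k, Or.inr (Or.inr (exists_eq_smul_single_and_apply_eq_zero hk hγ hγα hγβ))⟩
  exact (not_pairwise_orthogonal_of_zeros_subsingleton hα hβ hγ (hdeg 0) (hdeg 1)
    ⟨hαβ, hαγ, hβγ⟩).elim
end

section
/- Let s,x,y,t ∈ ℂ with sy+xt+1 = x^2+y^2, and consider the symmetric domain-3 signature of arity n determined by values g_{i,j,k} (i+j+k = n) satisfying the three Fibonacci recurrences with parameters s,x,y,t. Then g is uniquely determined by its three 'top' values g_{n,0,0}, g_{n-1,1,0}, g_{n-1,0,1}: any two signatures of arity n satisfying the recurrences with the same parameters and agreeing on these three values are equal. -/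
/-!
Each of the three recurrences expresses a value `g i j k` with `j + k ≥ 2` through values with
smaller `j + k`, so by strong induction on `j + k` the signature is determined by its values with
`j + k ≤ 1`, which are the three top values.
-/

/-- The recurrences are written at `(i, j, k)` for the paper's `(i - 2, j, k)`, avoiding
truncated subtraction. -/
def IsFibonacciGate {R : Type*} [Semiring R] (s x y t : R) (n : ℕ) (g : ℕ → ℕ → ℕ → R) :
    Prop :=
  ∀ i j k : ℕ, i + j + k + 2 = n →
    (g i (j+2) k = g (i+2) j k + s * g (i+1) (j+1) k + x * g (i+1) j (k+1)) ∧
    (g i (j+1) (k+1) = x * g (i+1) (j+1) k + y * g (i+1) j (k+1)) ∧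
    (g i j (k+2) = g (i+2) j k + y * g (i+1) (j+1) k + t * g (i+1) j (k+1))

namespace IsFibonacciGate

variable {R : Type*} [Semiring R] {s x y t : R} {n : ℕ} {g₁ g₂ : ℕ → ℕ → ℕ → R}

theorem eq_of_eqOn_lower (h₁ : IsFibonacciGate s x y t n g₁) (h₂ : IsFibonacciGate s x y t n g₂)
    {i j k : ℕ} (hn : i + j + k = n) (hjk : 2 ≤ j + k)
    (hlower : ∀ i' j' k', i' + j' + k' = n → j' + k' < j + k → g₁ i' j' k' = g₂ i' j' k') :
    g₁ i j k = g₂ i j k := by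
  match j, k, hjk with
  | j + 2, k, _ =>
    rw [(h₁ i j k (by omega)).1, (h₂ i j k (by omega)).1,
      hlower (i+2) j k (by omega) (by omega), hlower (i+1) (j+1) k (by omega) (by omega),
      hlower (i+1) j (k+1) (by omega) (by omega)]
  | 1, k + 1, _ =>
    rw [(h₁ i 0 k (by omega)).2.1, (h₂ i 0 k (by omega)).2.1,
      hlower (i+1) 1 k (by omega) (by omega), hlower (i+1) 0 (k+1) (by omega) (by omega)]
  | 0, k + 2, _ =>
    rw [(h₁ i 0 k (by omega)).2.2, (h₂ i 0 k (by omega)).2.2,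
      hlower (i+2) 0 k (by omega) (by omega), hlower (i+1) 1 k (by omega) (by omega),
      hlower (i+1) 0 (k+1) (by omega) (by omega)]

theorem eq_of_eq_top (h₁ : IsFibonacciGate s x y t n g₁) (h₂ : IsFibonacciGate s x y t n g₂)
    (h00 : g₁ n 0 0 = g₂ n 0 0) (h10 : g₁ (n-1) 1 0 = g₂ (n-1) 1 0)
    (h01 : g₁ (n-1) 0 1 = g₂ (n-1) 0 1) :
    ∀ i j k, i + j + k = n → g₁ i j k = g₂ i j k := by
  suffices h : ∀ m i j k, i + j + k = n → j + k = m → g₁ i j k = g₂ i j k from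
    fun i j k hn ↦ h _ i j k hn rfl
  intro m
  induction m using Nat.strong_induction_on with
  | _ m ih =>
    intro i j k hn hm
    by_cases hjk : 2 ≤ j + k
    · exact eq_of_eqOn_lower h₁ h₂ hn hjk fun i' j' k' hn' hlt ↦ ih _ (hm ▸ hlt) i' j' k' hn' rfl
    · obtain ⟨rfl, rfl⟩ | ⟨rfl, rfl⟩ | ⟨rfl, rfl⟩ :
          (j = 0 ∧ k = 0) ∨ (j = 1 ∧ k = 0) ∨ (j = 0 ∧ k = 1) := by omega
      · obtain rfl : i = n := by omega
        exact h00
      · obtain rfl : i = n - 1 := by omega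
        exact h10
      · obtain rfl : i = n - 1 := by omega
        exact h01

end IsFibonacciGate

theorem stmt_16_general (s x y t : ℂ)
    (n : ℕ) (g1 g2 : ℕ → ℕ → ℕ → ℂ)
    (hg1 : ∀ i j k : ℕ, i + j + k + 2 = n →
      (g1 i (j+2) k = g1 (i+2) j k + s * g1 (i+1) (j+1) k + x * g1 (i+1) j (k+1)) ∧
      (g1 i (j+1) (k+1) = x * g1 (i+1) (j+1) k + y * g1 (i+1) j (k+1)) ∧
      (g1 i j (k+2) = g1 (i+2) j k + y * g1 (i+1) (j+1) k + t * g1 (i+1) j (k+1)))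
    (hg2 : ∀ i j k : ℕ, i + j + k + 2 = n →
      (g2 i (j+2) k = g2 (i+2) j k + s * g2 (i+1) (j+1) k + x * g2 (i+1) j (k+1)) ∧
      (g2 i (j+1) (k+1) = x * g2 (i+1) (j+1) k + y * g2 (i+1) j (k+1)) ∧
      (g2 i j (k+2) = g2 (i+2) j k + y * g2 (i+1) (j+1) k + t * g2 (i+1) j (k+1)))
    (htop1 : g1 n 0 0 = g2 n 0 0)
    (htop2 : g1 (n-1) 1 0 = g2 (n-1) 1 0)
    (htop3 : g1 (n-1) 0 1 = g2 (n-1) 0 1) :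
    ∀ i j k : ℕ, i + j + k = n → g1 i j k = g2 i j k :=
  IsFibonacciGate.eq_of_eq_top hg1 hg2 htop1 htop2 htop3

theorem stmt_16 (s x y t : ℂ) (hst : s*y + x*t + 1 = x^2 + y^2)
    (n : ℕ) (g1 g2 : ℕ → ℕ → ℕ → ℂ)
    (hg1 : ∀ i j k : ℕ, i + j + k + 2 = n →
      (g1 i (j+2) k = g1 (i+2) j k + s * g1 (i+1) (j+1) k + x * g1 (i+1) j (k+1)) ∧
      (g1 i (j+1) (k+1) = x * g1 (i+1) (j+1) k + y * g1 (i+1) j (k+1)) ∧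
      (g1 i j (k+2) = g1 (i+2) j k + y * g1 (i+1) (j+1) k + t * g1 (i+1) j (k+1)))
    (hg2 : ∀ i j k : ℕ, i + j + k + 2 = n →
      (g2 i (j+2) k = g2 (i+2) j k + s * g2 (i+1) (j+1) k + x * g2 (i+1) j (k+1)) ∧
      (g2 i (j+1) (k+1) = x * g2 (i+1) (j+1) k + y * g2 (i+1) j (k+1)) ∧
      (g2 i j (k+2) = g2 (i+2) j k + y * g2 (i+1) (j+1) k + t * g2 (i+1) j (k+1)))
    (htop1 : g1 n 0 0 = g2 n 0 0)
    (htop2 : g1 (n-1) 1 0 = g2 (n-1) 1 0)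
    (htop3 : g1 (n-1) 0 1 = g2 (n-1) 0 1) :
    ∀ i j k : ℕ, i + j + k = n → g1 i j k = g2 i j k :=
  stmt_16_general s x y t n g1 g2 hg1 hg2 htop1 htop2 htop3
end
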